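/- arXiv:2008.09495 — 2 statements merged into one kernel-verified Lean document; each statement's English description precedes it below -/
import Mathlib

section
/- Let X be a pure d-dimensional finite simplicial complex. Every minimal collection of k-cochains α₁,…,α_m ∈ C^k(X; F₂) is locally minimal; that is, for every simplex σ of X the localized collection I_σ(α₁),…,I_σ(α_m) is a minimal collection in the link X_σ. -/
/-!
A `k`-coboundary `δη` of the link of `σ` is the localization `I_σ(δ I^σ η)` of the coboundary in
`K` of the lift of `η`, and every cell of `δ I^σ η` contains `σ`. Adding these coboundaries to the
`α_a` leaves their union unchanged off the star of `σ`, while on the star the link norm of the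
localization is a constant multiple (depending only on `d`, `k`, `|σ|`) of the norm in `K`: the
top faces of the link through `τ` are the `ρ \ σ` for the top faces `ρ` of `K` through `τ ∪ σ`.
So minimality in `K` descends to the link. When `|σ| > k` (where `k - |σ|` truncates) or `k > d`
the inequality is immediate.
-/

/-- A finite (abstract) simplicial complex on vertex set `V`, given by its finite,
downward-closed set of faces (including the empty face when nonempty). -/
structure SComplex (V : Type) where
  faces : Finset (Finset V)
  down_closed : ∀ s ∈ faces, ∀ t ⊆ s, t ∈ faces

namespace SComplex

variable {V : Type} [DecidableEq V]

/-- `K` is pure of dimension `d`: every face has at most `d+1` vertices and is contained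
in a face with exactly `d+1` vertices. -/
def IsPure (K : SComplex V) (d : ℕ) : Prop :=
  ∀ s ∈ K.faces, s.card ≤ d + 1 ∧ ∃ t ∈ K.faces, t.card = d + 1 ∧ s ⊆ t

/-- The weight of a face `s` of a (pure `d`-dimensional) complex:
`w(s) = #{τ ∈ X_d : s ⊆ τ} / (C(d+1, |s|) · |X_d|)`. -/
noncomputable def wt (K : SComplex V) (d : ℕ) (s : Finset V) : ℝ :=
  ((K.faces.filter fun t => t.card = d + 1 ∧ s ⊆ t).card : ℝ) /
    (((d + 1).choose s.card : ℝ) * ((K.faces.filter fun t => t.card = d + 1).card : ℝ))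

/-- The norm of an `F₂`-cochain, identified with its support (a finite set of faces):
the sum of the weights of the cells in the support. -/
noncomputable def nrm (K : SComplex V) (d : ℕ) (α : Finset (Finset V)) : ℝ :=
  ∑ s ∈ α, K.wt d s

/-- `α` is (the support of) a cochain living on the faces of `K` with `c` vertices
(i.e. a `(c-1)`-dimensional cochain). -/
def IsCochainOn (K : SComplex V) (c : ℕ) (α : Finset (Finset V)) : Prop :=
  ∀ s ∈ α, s ∈ K.faces ∧ s.card = c

/-- The simplicial coboundary over `F₂` of a cochain `α` supported on faces with `c`
vertices: the faces with `c+1` vertices containing an odd number of elements of `α`. -/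
def cobd (K : SComplex V) (c : ℕ) (α : Finset (Finset V)) : Finset (Finset V) :=
  K.faces.filter fun t => t.card = c + 1 ∧ (α.filter fun s => s ⊆ t).card % 2 = 1

/-- `β` is a coboundary among the cochains on faces with `c+1` vertices (i.e. a
`c`-dimensional coboundary, the complex being augmented by `X₋₁ = {∅}`). -/
def IsCobOn (K : SComplex V) (c : ℕ) (β : Finset (Finset V)) : Prop :=
  ∃ γ, K.IsCochainOn c γ ∧ K.cobd c γ = β

/-- The union of the supports of a finite family of cochains. -/
def unionF {m : ℕ} (f : Fin m → Finset (Finset V)) : Finset (Finset V) :=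
  Finset.univ.biUnion f

/-- A collection `α₁, …, α_m` of `k`-cochains is minimal if
`‖⋃ α_a‖ ≤ ‖⋃ (α_a + γ_a)‖` for every collection `γ₁, …, γ_m` of `k`-coboundaries. -/
def IsMinimalCol (K : SComplex V) (d k : ℕ) {m : ℕ} (α : Fin m → Finset (Finset V)) : Prop :=
  ∀ γ : Fin m → Finset (Finset V), (∀ a, K.IsCobOn k (γ a)) →
    K.nrm d (unionF α) ≤ K.nrm d (unionF fun a => symmDiff (α a) (γ a))

/-- The link of a simplex `σ`. -/
def link (K : SComplex V) (σ : Finset V) : SComplex V where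
  faces := K.faces.filter fun τ => τ ∩ σ = ∅ ∧ τ ∪ σ ∈ K.faces
  down_closed := by
    intro s hs t ht
    simp only [Finset.mem_filter] at hs ⊢
    refine ⟨K.down_closed s hs.1 t ht, ?_, ?_⟩
    · exact Finset.subset_empty.mp (hs.2.1 ▸ Finset.inter_subset_inter ht (le_refl σ))
    · exact K.down_closed (s ∪ σ) hs.2.2 (t ∪ σ) (Finset.union_subset_union ht (le_refl σ))

/-- Localization of a cochain to the link of `σ`: `I_σ(α) = { s \ σ : s ∈ α, σ ⊆ s }`. -/
def locz (σ : Finset V) (α : Finset (Finset V)) : Finset (Finset V) :=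
  (α.filter fun s => σ ⊆ s).image fun s => s \ σ

/-- Lifting of a cochain from the link of `σ`: `I^σ(β) = { τ ∪ σ : τ ∈ β }`. -/
def liftz (σ : Finset V) (β : Finset (Finset V)) : Finset (Finset V) :=
  β.image fun τ => τ ∪ σ

/-- A collection of `k`-cochains is locally minimal if all its localizations to links are
minimal collections (in the link, with the link's weight function). -/
def IsLocMinimalCol (K : SComplex V) (d k : ℕ) {m : ℕ}
    (α : Fin m → Finset (Finset V)) : Prop :=
  ∀ σ ∈ K.faces,
    IsMinimalCol (K.link σ) (d - σ.card) (k - σ.card) (fun a => locz σ (α a))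

/-- `K` is a `ρ`-skeleton expander: `‖E(A,A)‖ ≤ 4(‖A‖² + ρ‖A‖)` for every set `A` of
vertices. -/
def SkelExpander (K : SComplex V) (d : ℕ) (ρ : ℝ) : Prop :=
  ∀ A : Finset V, (∀ v ∈ A, ({v} : Finset V) ∈ K.faces) →
    K.nrm d (K.faces.filter fun e => e.card = 2 ∧ e ⊆ A) ≤
      4 * ((K.nrm d (A.image fun v => ({v} : Finset V))) ^ 2 +
        ρ * K.nrm d (A.image fun v => ({v} : Finset V)))

/-- The `k`-th collective cofilling constant of `K` (w.r.t. the weight function of a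
`d`-dimensional complex) is at most `μ`: every finite collection of nonzero
`(k+1)`-coboundaries `β₁, …, β_m` admits `k`-cochains `γ₁, …, γ_m` with `δγ_a = β_a` and
`‖⋃ γ_a‖ ≤ μ ‖⋃ β_a‖`. -/
def CollCofillLE (K : SComplex V) (d k : ℕ) (μ : ℝ) : Prop :=
  ∀ (m : ℕ) (β : Fin m → Finset (Finset V)),
    (∀ a, (β a).Nonempty ∧ K.IsCobOn (k + 1) (β a)) →
    ∃ γ : Fin m → Finset (Finset V),
      (∀ a, K.IsCochainOn (k + 1) (γ a) ∧ K.cobd (k + 1) (γ a) = β a) ∧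
      K.nrm d (unionF γ) ≤ μ * K.nrm d (unionF β)

end SComplex

namespace SComplex

variable {V : Type}

lemma IsCochainOn.eq_empty_of_isPure {c d : ℕ} {K : SComplex V} {A : Finset (Finset V)}
    (hK : K.IsPure d) (hA : K.IsCochainOn c A) (hc : d + 1 < c) : A = ∅ :=
  Finset.eq_empty_of_forall_notMem fun t ht => by
    have := (hK t (hA t ht).1).1
    have := (hA t ht).2
    omega

variable [DecidableEq V]

section Norm

variable (K : SComplex V) (d : ℕ)

lemma wt_nonneg (s : Finset V) : 0 ≤ K.wt d s := by
  unfold wt; positivity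

lemma nrm_nonneg (α : Finset (Finset V)) : 0 ≤ K.nrm d α :=
  Finset.sum_nonneg fun s _ => K.wt_nonneg d s

lemma nrm_mono {α β : Finset (Finset V)} (h : α ⊆ β) : K.nrm d α ≤ K.nrm d β :=
  Finset.sum_le_sum_of_subset_of_nonneg h fun s _ _ => K.wt_nonneg d s

lemma nrm_filter_le_of_filter_not_eq {A B : Finset (Finset V)} (p : Finset V → Prop)
    [DecidablePred p] (hAB : K.nrm d A ≤ K.nrm d B)
    (h : A.filter (fun t => ¬ p t) = B.filter (fun t => ¬ p t)) :
    K.nrm d (A.filter p) ≤ K.nrm d (B.filter p) := by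
  unfold nrm at *
  rw [← Finset.sum_filter_add_sum_filter_not A p, ← Finset.sum_filter_add_sum_filter_not B p,
    h] at hAB
  linarith

def topCount (s : Finset V) : ℕ :=
  (K.faces.filter fun t => t.card = d + 1 ∧ s ⊆ t).card

lemma wt_eq_topCount (s : Finset V) :
    K.wt d s = K.topCount d s / ((d + 1).choose s.card * K.topCount d ∅) := by
  simp [wt, topCount]

lemma topCount_antitone : Antitone (K.topCount d) := fun _ _ h =>
  Finset.card_le_card <| Finset.monotone_filter_right _ fun _ _ ht => ⟨ht.1, h.trans ht.2⟩

lemma card_le_of_topCount_ne_zero {s : Finset V} (h : K.topCount d s ≠ 0) :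
    s.card ≤ d + 1 := by
  obtain ⟨t, ht⟩ := Finset.card_ne_zero.mp h
  obtain ⟨-, htc, hst⟩ := Finset.mem_filter.mp ht
  exact htc ▸ Finset.card_le_card hst

end Norm

section Localization

variable {K : SComplex V} {σ τ : Finset V}

lemma mem_link : τ ∈ (K.link σ).faces ↔ τ ∈ K.faces ∧ Disjoint τ σ ∧ τ ∪ σ ∈ K.faces := by
  simp [link, Finset.disjoint_iff_inter_eq_empty]

lemma mem_locz {A : Finset (Finset V)} : τ ∈ locz σ A ↔ Disjoint τ σ ∧ τ ∪ σ ∈ A := by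
  simp only [locz, Finset.mem_image, Finset.mem_filter]
  constructor
  · rintro ⟨s, ⟨hs, hσs⟩, rfl⟩
    exact ⟨disjoint_sdiff_self_left, by rwa [Finset.sdiff_union_of_subset hσs]⟩
  · rintro ⟨hτσ, hA⟩
    exact ⟨τ ∪ σ, ⟨hA, Finset.subset_union_right⟩, Finset.union_sdiff_cancel_right hτσ⟩

lemma card_add_card_of_mem_locz {A : Finset (Finset V)} {n : ℕ}
    (hA : ∀ t ∈ A, t.card = n) (hτ : τ ∈ locz σ A) : τ.card + σ.card = n := by
  obtain ⟨hτσ, hτA⟩ := mem_locz.mp hτ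
  rw [← Finset.card_union_of_disjoint hτσ, hA _ hτA]

lemma locz_symmDiff (A B : Finset (Finset V)) :
    locz σ (symmDiff A B) = symmDiff (locz σ A) (locz σ B) := by
  ext τ
  simp only [mem_locz, Finset.mem_symmDiff]
  tauto

lemma locz_unionF {m : ℕ} (f : Fin m → Finset (Finset V)) :
    locz σ (unionF f) = unionF fun a => locz σ (f a) := by
  ext τ
  simp only [mem_locz, unionF, Finset.mem_biUnion, Finset.mem_univ, true_and]
  tauto

variable (K) in
lemma topCount_link {d : ℕ} (hσ : σ.card ≤ d) (hτ : Disjoint τ σ) :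
    (K.link σ).topCount (d - σ.card) τ = K.topCount d (τ ∪ σ) := by
  refine Finset.card_nbij' (· ∪ σ) (· \ σ) ?_ ?_ ?_ ?_
  · intro u hu
    simp only [Finset.mem_coe, Finset.mem_filter, mem_link] at hu ⊢
    obtain ⟨⟨-, huσ, huK⟩, hu, hτu⟩ := hu
    rw [Finset.card_union_of_disjoint huσ]
    exact ⟨huK, by omega, Finset.union_subset_union hτu le_rfl⟩
  · intro t ht
    simp only [Finset.mem_coe, Finset.mem_filter, mem_link] at ht ⊢
    obtain ⟨htK, ht, hτt⟩ := ht
    have hσt : σ ⊆ t := Finset.subset_union_right.trans hτt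
    rw [Finset.sdiff_union_of_subset hσt, Finset.card_sdiff_of_subset hσt]
    refine ⟨⟨K.down_closed t htK _ Finset.sdiff_subset, disjoint_sdiff_self_left, htK⟩,
      by omega, ?_⟩
    exact Finset.subset_sdiff.mpr ⟨Finset.subset_union_left.trans hτt, hτ⟩
  · intro u hu
    exact Finset.union_sdiff_cancel_right (mem_link.mp (Finset.mem_filter.mp hu).1).2.1
  · intro t ht
    exact Finset.sdiff_union_of_subset
      (Finset.subset_union_right.trans (Finset.mem_filter.mp ht).2.2)

variable (K) in
lemma wt_link {d : ℕ} (hσ : σ.card ≤ d) (hτ : Disjoint τ σ) :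
    (K.link σ).wt (d - σ.card) τ =
      ((d + 1).choose (τ.card + σ.card) * K.topCount d ∅) /
        ((d - σ.card + 1).choose τ.card * K.topCount d σ) * K.wt d (τ ∪ σ) := by
  have hσ' := topCount_link K hσ (Finset.disjoint_empty_left σ)
  rw [Finset.empty_union] at hσ'
  rw [wt_eq_topCount, wt_eq_topCount, topCount_link K hσ hτ, hσ',
    Finset.card_union_of_disjoint hτ]
  by_cases h0 : K.topCount d (τ ∪ σ) = 0
  · simp [h0]
  -- a top face containing `τ ∪ σ` makes the normalising constant of `K.wt` nonzero
  have hC : ((d + 1).choose (τ.card + σ.card) : ℝ) ≠ 0 := by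
    have := K.card_le_of_topCount_ne_zero d h0
    rw [Finset.card_union_of_disjoint hτ] at this
    exact_mod_cast (Nat.choose_pos this).ne'
  have hN : (K.topCount d ∅ : ℝ) ≠ 0 := by
    have := K.topCount_antitone d (Finset.empty_subset (τ ∪ σ))
    exact_mod_cast (Nat.pos_of_ne_zero h0).trans_le this |>.ne'
  rw [div_mul_div_comm, mul_comm (_ * _ : ℝ) (K.topCount d (τ ∪ σ) : ℝ),
    mul_div_mul_right _ _ (mul_ne_zero hC hN)]

variable (K) in
lemma nrm_link_locz {d i : ℕ} {A : Finset (Finset V)} (hσ : σ.card ≤ d)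
    (hA : ∀ t ∈ A, t.card = i + σ.card) :
    (K.link σ).nrm (d - σ.card) (locz σ A) =
      ((d + 1).choose (i + σ.card) * K.topCount d ∅) /
        ((d - σ.card + 1).choose i * K.topCount d σ) * K.nrm d (A.filter (σ ⊆ ·)) := by
  have hinj : Set.InjOn (· \ σ) (A.filter (σ ⊆ ·) : Set (Finset V)) := by
    intro t₁ h₁ t₂ h₂ he
    simp only [Finset.mem_coe, Finset.mem_filter] at h₁ h₂
    rw [← Finset.sdiff_union_of_subset h₁.2, ← Finset.sdiff_union_of_subset h₂.2]
    exact congrArg (· ∪ σ) he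
  rw [nrm, nrm, locz, Finset.sum_image hinj, Finset.mul_sum]
  refine Finset.sum_congr rfl fun t ht => ?_
  obtain ⟨htA, hσt⟩ := Finset.mem_filter.mp ht
  have hcard : (t \ σ).card = i := by
    rw [Finset.card_sdiff_of_subset hσt, hA t htA]; omega
  rw [wt_link K hσ disjoint_sdiff_self_left, Finset.sdiff_union_of_subset hσt, hcard]

end Localization

section Cochains

variable {K : SComplex V}

lemma isCochainOn_cobd (c : ℕ) (β : Finset (Finset V)) : K.IsCochainOn (c + 1) (K.cobd c β) :=
  fun _ ht => ⟨(Finset.mem_filter.mp ht).1, (Finset.mem_filter.mp ht).2.1⟩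

lemma IsCochainOn.symmDiff {c : ℕ} {A B : Finset (Finset V)} (hA : K.IsCochainOn c A)
    (hB : K.IsCochainOn c B) : K.IsCochainOn c (symmDiff A B) := fun t ht =>
  (Finset.mem_symmDiff.mp ht).elim (fun h => hA t h.1) (fun h => hB t h.1)

lemma IsCochainOn.unionF {c m : ℕ} {f : Fin m → Finset (Finset V)}
    (hf : ∀ a, K.IsCochainOn c (f a)) : K.IsCochainOn c (unionF f) := fun t ht => by
  obtain ⟨a, -, ha⟩ := Finset.mem_biUnion.mp ht
  exact hf a t ha

lemma subset_of_mem_cobd {c : ℕ} {β : Finset (Finset V)} {σ t : Finset V}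
    (hβ : ∀ s ∈ β, σ ⊆ s) (ht : t ∈ K.cobd c β) : σ ⊆ t := by
  obtain ⟨-, -, hodd⟩ := Finset.mem_filter.mp ht
  obtain ⟨s, hs⟩ : (β.filter (· ⊆ t)).Nonempty := by
    rw [Finset.nonempty_iff_ne_empty]
    rintro h
    simp [h] at hodd
  exact (hβ s (Finset.mem_filter.mp hs).1).trans (Finset.mem_filter.mp hs).2

lemma IsCochainOn.liftz {c : ℕ} {σ : Finset V} {η : Finset (Finset V)}
    (hη : (K.link σ).IsCochainOn c η) : K.IsCochainOn (c + σ.card) (liftz σ η) := by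
  intro s hs
  obtain ⟨τ, hτ, rfl⟩ := Finset.mem_image.mp hs
  obtain ⟨⟨-, hτσ, hτK⟩, hτc⟩ := And.imp_left mem_link.mp (hη τ hτ)
  exact ⟨hτK, by rw [Finset.card_union_of_disjoint hτσ, hτc]⟩

lemma subset_of_mem_liftz {σ s : Finset V} {η : Finset (Finset V)} (hs : s ∈ liftz σ η) :
    σ ⊆ s := by
  obtain ⟨τ, -, rfl⟩ := Finset.mem_image.mp hs
  exact Finset.subset_union_right

lemma card_filter_liftz_subset {σ τ : Finset V} {η : Finset (Finset V)}
    (hη : ∀ s ∈ η, Disjoint s σ) :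
    ((liftz σ η).filter (· ⊆ τ ∪ σ)).card = (η.filter (· ⊆ τ)).card := by
  rw [liftz, Finset.filter_image, Finset.card_image_of_injOn]
  · congr 1
    refine Finset.filter_congr fun s hs =>
      ⟨fun h => ?_, fun h => Finset.union_subset_union h le_rfl⟩
    exact (hη s hs).left_le_of_le_sup_right (Finset.subset_union_left.trans h)
  · intro s₁ h₁ s₂ h₂ he
    simp only [Finset.mem_coe, Finset.mem_filter] at h₁ h₂
    rw [← Finset.union_sdiff_cancel_right (hη _ h₁.1),
      ← Finset.union_sdiff_cancel_right (hη _ h₂.1)]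
    exact congrArg (· \ σ) he

lemma locz_cobd_liftz {c : ℕ} {σ : Finset V} {η : Finset (Finset V)}
    (hη : ∀ s ∈ η, Disjoint s σ) :
    locz σ (K.cobd (c + σ.card) (liftz σ η)) = (K.link σ).cobd c η := by
  ext τ
  simp only [mem_locz, cobd, Finset.mem_filter, mem_link]
  constructor
  · rintro ⟨hτσ, hK, hc, hodd⟩
    rw [Finset.card_union_of_disjoint hτσ] at hc
    rw [card_filter_liftz_subset hη] at hodd
    exact ⟨⟨K.down_closed _ hK τ Finset.subset_union_left, hτσ, hK⟩, by omega, hodd⟩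
  · rintro ⟨⟨-, hτσ, hK⟩, hc, hodd⟩
    rw [← card_filter_liftz_subset hη] at hodd
    exact ⟨hτσ, hK, by rw [Finset.card_union_of_disjoint hτσ]; omega, hodd⟩

end Cochains

section Collections

variable {m : ℕ} {α γ : Fin m → Finset (Finset V)}

lemma unionF_subset_unionF_symmDiff (h : ∀ a, Disjoint (α a) (γ a)) :
    unionF α ⊆ unionF fun a => symmDiff (α a) (γ a) := by
  intro t ht
  obtain ⟨a, -, ha⟩ := Finset.mem_biUnion.mp ht
  exact Finset.mem_biUnion.mpr ⟨a, Finset.mem_univ a,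
    Finset.mem_symmDiff.mpr (Or.inl ⟨ha, Finset.disjoint_left.mp (h a) ha⟩)⟩

lemma filter_not_unionF_symmDiff (p : Finset V → Prop) [DecidablePred p]
    (hγ : ∀ a, ∀ t ∈ γ a, p t) :
    (unionF fun a => symmDiff (α a) (γ a)).filter (fun t => ¬ p t) =
      (unionF α).filter (fun t => ¬ p t) := by
  ext t
  simp only [Finset.mem_filter, unionF, Finset.mem_biUnion, Finset.mem_univ, true_and,
    Finset.mem_symmDiff]
  constructor
  · rintro ⟨⟨a, ⟨ha, -⟩ | ⟨hγa, -⟩⟩, hp⟩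
    · exact ⟨⟨a, ha⟩, hp⟩
    · exact absurd (hγ a t hγa) hp
  · rintro ⟨⟨a, ha⟩, hp⟩
    exact ⟨⟨a, Or.inl ⟨ha, fun hγa => hp (hγ a t hγa)⟩⟩, hp⟩

end Collections

section LocalMinimality

variable {K : SComplex V} {d k m : ℕ} {α : Fin m → Finset (Finset V)} {σ : Finset V}

lemma IsMinimalCol.link (hmin : IsMinimalCol K d k α)
    (hα : ∀ a, K.IsCochainOn (k + 1) (α a)) (hσk : σ.card ≤ k) (hkd : k ≤ d) :
    IsMinimalCol (K.link σ) (d - σ.card) (k - σ.card) (fun a => locz σ (α a)) := by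
  intro γ' hγ'
  choose η hη hηγ' using hγ'
  obtain ⟨j, rfl⟩ : ∃ j, k = j + σ.card := ⟨k - σ.card, by omega⟩
  simp only [Nat.add_sub_cancel] at hη hηγ' ⊢
  set γ := fun a => K.cobd (j + σ.card) (liftz σ (η a))
  have hdisj : ∀ a, ∀ s ∈ η a, Disjoint s σ := fun a s hs => (mem_link.mp (hη a s hs).1).2.1
  have hγσ : ∀ a, ∀ t ∈ γ a, σ ⊆ t := fun a _ => subset_of_mem_cobd fun _ => subset_of_mem_liftz
  have hloc : ∀ a, γ' a = locz σ (γ a) := fun a => by rw [← hηγ', locz_cobd_liftz (hdisj a)]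
  have hcard : ∀ A, K.IsCochainOn (j + σ.card + 1) A → ∀ t ∈ A, t.card = (j + 1) + σ.card :=
    fun A hA t ht => by rw [(hA t ht).2]; omega
  have hαγ := IsCochainOn.unionF fun a => (hα a).symmDiff (isCochainOn_cobd _ (liftz σ (η a)))
  have hsymm : (fun a => symmDiff (locz σ (α a)) (γ' a)) =
      fun a => locz σ (symmDiff (α a) (γ a)) := funext fun a => by rw [hloc, locz_symmDiff]
  rw [hsymm, ← locz_unionF, ← locz_unionF, nrm_link_locz K (by omega) (hcard _ (.unionF hα)),
    nrm_link_locz K (by omega) (hcard _ hαγ)]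
  gcongr
  exact K.nrm_filter_le_of_filter_not_eq d _ (hmin γ fun a => ⟨_, (hη a).liftz, rfl⟩)
    (filter_not_unionF_symmDiff _ hγσ).symm

lemma isMinimalCol_link_of_lt_card (hα : ∀ a, K.IsCochainOn (k + 1) (α a)) (hk : k < σ.card) :
    IsMinimalCol (K.link σ) d (k - σ.card) (fun a => locz σ (α a)) := by
  intro γ' hγ'
  refine (K.link σ).nrm_mono d (unionF_subset_unionF_symmDiff fun a => ?_)
  obtain ⟨η, -, hη⟩ := hγ' a
  rw [← hη]
  refine Finset.disjoint_left.mpr fun t ht htγ => ?_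
  -- `k - σ.card` truncates to `0`: the cells of `locz σ (α a)` are empty, those of the
  -- coboundary are vertices
  have := card_add_card_of_mem_locz (fun s hs => ((hα a) s hs).2) ht
  have := (isCochainOn_cobd _ η t htγ).2
  omega

lemma isMinimalCol_link_of_isPure_of_lt (hK : K.IsPure d)
    (hα : ∀ a, K.IsCochainOn (k + 1) (α a)) (hdk : d < k) (d' k' : ℕ) :
    IsMinimalCol (K.link σ) d' k' (fun a => locz σ (α a)) := by
  intro γ' _
  have hempty : ∀ a, α a = ∅ := fun a => (hα a).eq_empty_of_isPure hK (by omega)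
  have hloc : (unionF fun a => locz σ (α a)) = ∅ := by ext; simp [hempty, locz, unionF]
  rw [hloc, nrm, Finset.sum_empty]
  exact (K.link σ).nrm_nonneg d' _

end LocalMinimality

end SComplex

open SComplex in
/-- **Minimal collections are locally minimal** (Lemma 4.5(1) of Kaufman–Tessler): in a
pure `d`-dimensional finite simplicial complex, every minimal collection of `k`-cochains
is locally minimal. -/
theorem minimal_is_locally_minimal {V : Type} [DecidableEq V] (K : SComplex V)
    (d k : ℕ) (hpure : K.IsPure d) {m : ℕ} (α : Fin m → Finset (Finset V))
    (hα : ∀ a, K.IsCochainOn (k + 1) (α a))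
    (hmin : IsMinimalCol K d k α) :
    IsLocMinimalCol K d k α := by
  intro σ _
  rcases lt_or_ge k σ.card with hkσ | hσk
  · exact isMinimalCol_link_of_lt_card hα hkσ
  rcases lt_or_ge d k with hdk | hkd
  · exact isMinimalCol_link_of_isPure_of_lt hpure hα hdk _ _
  exact hmin.link hα hσk hkd
end

section
/- Let X be a pure d-dimensional finite simplicial complex. If α₁,…,α_m ∈ C^k(X; F₂) is a minimal collection of k-cochains and β ∈ C^k(X; F₂) is an arbitrary k-cochain, then the collection α₁∩β,…,α_m∩β (intersection of supports) is also a minimal collection. -/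
open SComplex in
lemma wt_nonneg' {V : Type} [DecidableEq V] (K : SComplex V) (d : ℕ) (s : Finset V) :
    0 ≤ K.wt d s := by
  unfold SComplex.wt
  positivity

open SComplex in
lemma nrm_mono' {V : Type} [DecidableEq V] (K : SComplex V) (d : ℕ)
    {s t : Finset (Finset V)} (h : s ⊆ t) : K.nrm d s ≤ K.nrm d t :=
  Finset.sum_le_sum_of_subset_of_nonneg h (fun x _ _ => wt_nonneg' K d x)

open SComplex in
lemma nrm_union_le' {V : Type} [DecidableEq V] (K : SComplex V) (d : ℕ)
    (s t : Finset (Finset V)) : K.nrm d (s ∪ t) ≤ K.nrm d s + K.nrm d t := by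
  have h1 : s ∪ t = s ∪ (t \ s) := by
    ext x; simp [Finset.mem_union, Finset.mem_sdiff]
  rw [SComplex.nrm, h1, Finset.sum_union (Finset.disjoint_sdiff)]
  exact add_le_add le_rfl (nrm_mono' K d (Finset.sdiff_subset))

open SComplex in
/-- **Restriction of minimal collections** (Lemma 4.5(2) of Kaufman–Tessler): in a pure
`d`-dimensional finite simplicial complex, if `α₁, …, α_m` is a minimal collection of
`k`-cochains and `β` is an arbitrary `k`-cochain, then `α₁ ∩ β, …, α_m ∩ β` is also a
minimal collection. -/
theorem minimal_restriction {V : Type} [DecidableEq V] (K : SComplex V)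
    (d k : ℕ) (hpure : K.IsPure d) {m : ℕ} (α : Fin m → Finset (Finset V))
    (β : Finset (Finset V))
    (hα : ∀ a, K.IsCochainOn (k + 1) (α a)) (hβ : K.IsCochainOn (k + 1) β)
    (hmin : IsMinimalCol K d k α) :
    IsMinimalCol K d k (fun a => α a ∩ β) := by
  intro γ hγ
  have h1 := hmin γ hγ
  set A := unionF α with hA
  set B := unionF (fun a => α a ∩ β) with hB
  set D := unionF (fun a => symmDiff (α a ∩ β) (γ a)) with hD
  set E := unionF (fun a => symmDiff (α a) (γ a)) with hE
  have hBA : B ⊆ A := by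
    intro s hs
    simp only [hB, hA, unionF, Finset.mem_biUnion, Finset.mem_univ, true_and,
      Finset.mem_inter] at hs ⊢
    obtain ⟨a, hs1, _⟩ := hs
    exact ⟨a, hs1⟩
  have hED : E ⊆ D ∪ (A \ B) := by
    intro s hs
    simp only [hE, hD, hA, hB, unionF, Finset.mem_biUnion, Finset.mem_univ, true_and,
      Finset.mem_union, Finset.mem_sdiff, Finset.mem_symmDiff, Finset.mem_inter] at hs ⊢
    obtain ⟨a, hs⟩ := hs
    rcases hs with ⟨hsa, hsg⟩ | ⟨hsg, hsa⟩
    · by_cases hsb : s ∈ β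
      · exact Or.inl ⟨a, Or.inl ⟨⟨hsa, hsb⟩, hsg⟩⟩
      · refine Or.inr ⟨⟨a, hsa⟩, ?_⟩
        rintro ⟨b, _, hsb2⟩
        exact hsb hsb2
    · exact Or.inl ⟨a, Or.inr ⟨hsg, fun h => hsa h.1⟩⟩
  have key : K.nrm d A = K.nrm d B + K.nrm d (A \ B) := by
    rw [SComplex.nrm, SComplex.nrm, SComplex.nrm, ← Finset.sum_sdiff hBA]
    ring
  have h2 : K.nrm d E ≤ K.nrm d (D ∪ (A \ B)) := nrm_mono' K d hED
  have h3 : K.nrm d (D ∪ (A \ B)) ≤ K.nrm d D + K.nrm d (A \ B) := nrm_union_le' K d _ _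
  simp only [hA, hE] at h1
  linarith
end
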